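/- arXiv:2103.04408 — 2 statements merged into one kernel-verified Lean document; each statement's English description precedes it below -/
import Mathlib

section
/- Let (X, 𝓑, ρ) be a finite measure space, t ∈ ℝ, and T : 𝓑 → 𝓑 a map satisfying ρ(T(A)) ≤ C̃ · ρ(A)^{1-δ} for all A ∈ 𝓑, where δ ∈ (0,1) and C̃ > 0. Suppose ν is a measure on 𝓑 with ν(A) = ρ(T(A)) for all A, and ν is absolutely continuous with respect to ρ with density f. Then for every λ > 0, ρ({f > λ}) ≤ (C̃/λ)^{1/δ}, and consequently f ∈ L^p(ρ) for every p with p < 1/δ. -/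
/-!
Chebyshev's inequality on `A = {f > λ}` combined with the hypotheses gives
`λ ρ(A) ≤ ∫_A f dρ = ρ(T A) ≤ C̃ ρ(A)^{1-δ}`, which solves to `ρ(A) ≤ (C̃/λ)^{1/δ}`.
For integrability, split into dyadic level sets: `f^p ≤ 1 + ∑ₙ 2^{(n+1)p} 1_{f > 2^n}`, and the
tail bound dominates the resulting series by a geometric series of ratio `2^{p - 1/δ} < 1`.
-/

open MeasureTheory Set
open scoped ENNReal

theorem ENNReal.le_rpow_one_div_of_mul_le_mul_rpow {a m C : ℝ≥0∞} {δ : ℝ} (hδ : 0 < δ)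
    (ha : a ≠ 0) (hC : C ≠ ∞) (hm : m ≠ ∞) (h : a * m ≤ C * m ^ (1 - δ)) :
    m ≤ (C / a) ^ (1 / δ) := by
  rcases eq_or_ne m 0 with rfl | hm0
  · exact zero_le
  have hpow0 : m ^ (1 - δ) ≠ 0 := by simp [ENNReal.rpow_eq_zero_iff, hm0, hm]
  have hpowtop : m ^ (1 - δ) ≠ ∞ := by simp [ENNReal.rpow_eq_top_iff, hm0, hm]
  have hmδ : a * m ^ δ ≤ C := by
    rwa [← ENNReal.mul_le_mul_iff_left hpow0 hpowtop, mul_assoc, ← ENNReal.rpow_add _ _ hm0 hm,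
      add_sub_cancel, ENNReal.rpow_one]
  rwa [one_div, ENNReal.le_rpow_inv_iff hδ, ENNReal.le_div_iff_mul_le (.inl ha) (.inr hC),
    mul_comm]

theorem ENNReal.rpow_le_one_add_tsum_indicator (y : ℝ≥0∞) {p : ℝ} (hp : 0 ≤ p) :
    y ^ p ≤
      1 + ∑' n : ℕ, (Ioi ((2 : ℝ≥0∞) ^ n)).indicator (fun _ ↦ ((2 : ℝ≥0∞) ^ (n + 1)) ^ p) y := by
  set g : ℕ → ℝ≥0∞ :=
    fun n ↦ (Ioi ((2 : ℝ≥0∞) ^ n)).indicator (fun _ ↦ ((2 : ℝ≥0∞) ^ (n + 1)) ^ p) y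
  have hg : ∀ n : ℕ, 2 ^ n < y → g n = ((2 : ℝ≥0∞) ^ (n + 1)) ^ p :=
    fun n hn ↦ indicator_of_mem (show y ∈ Ioi ((2 : ℝ≥0∞) ^ n) from hn) _
  rcases le_or_gt y 1 with hy1 | hy1
  · exact (ENNReal.rpow_le_one hy1 hp).trans le_self_add
  rcases eq_or_ne y ∞ with rfl | hytop
  · have hsum : ∑' n, g n = ∞ := by
      refine top_unique ((ENNReal.tsum_const_eq_top_of_ne_zero one_ne_zero).symm.trans_le
        (ENNReal.tsum_le_tsum fun n ↦ ?_))
      rw [hg n (ENNReal.pow_ne_top ENNReal.ofNat_ne_top).lt_top]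
      exact ENNReal.one_rpow p ▸ ENNReal.rpow_le_rpow (one_le_pow₀ one_le_two) hp
    simp [hsum]
  obtain ⟨n, hn_lt, hn_le⟩ := ENNReal.exists_mem_Ioc_zpow (zero_lt_one.trans hy1).ne' hytop
    one_lt_two ENNReal.ofNat_ne_top
  have hn : 0 ≤ n := by
    by_contra! hneg
    have : (2 : ℝ≥0∞) ^ (n + 1) ≤ 1 := by
      simpa using ENNReal.zpow_le_of_le one_le_two (show n + 1 ≤ 0 by omega)
    exact (hy1.trans_le (hn_le.trans this)).false
  lift n to ℕ using hn
  rw [zpow_natCast] at hn_lt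
  rw [← Nat.cast_succ, zpow_natCast] at hn_le
  calc y ^ p ≤ ((2 : ℝ≥0∞) ^ (n + 1)) ^ p := ENNReal.rpow_le_rpow hn_le hp
    _ = g n := (hg n hn_lt).symm
    _ ≤ ∑' n, g n := ENNReal.le_tsum n
    _ ≤ 1 + ∑' n, g n := le_add_self

theorem ENNReal.two_pow_succ_rpow_mul_div_two_pow_rpow (C : ℝ≥0∞) {p q : ℝ} (hp : 0 ≤ p)
    (hq : 0 ≤ q) (n : ℕ) :
    ((2 : ℝ≥0∞) ^ (n + 1)) ^ p * (C / 2 ^ n) ^ q = 2 ^ p * C ^ q * (2 ^ (p - q)) ^ n := by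
  have h2n0 : (2 : ℝ≥0∞) ^ n ≠ 0 := pow_ne_zero _ two_ne_zero
  have h2ntop : (2 : ℝ≥0∞) ^ n ≠ ∞ := ENNReal.pow_ne_top ENNReal.ofNat_ne_top
  rw [pow_succ', ENNReal.mul_rpow_of_nonneg _ _ hp, ENNReal.div_rpow_of_nonneg _ _ hq,
    ← ENNReal.rpow_mul_natCast, mul_comm (p - q), ENNReal.rpow_natCast_mul,
    ENNReal.rpow_sub _ _ h2n0 h2ntop, div_eq_mul_inv, div_eq_mul_inv]
  ring

namespace MeasureTheory

variable {α : Type*} [MeasurableSpace α] {μ : Measure α} {f : α → ℝ≥0∞}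

theorem meas_lt_le_of_setLIntegral_le_mul_rpow [IsFiniteMeasure μ] (hf : Measurable f)
    {C : ℝ≥0∞} (hC : C ≠ ∞) {δ : ℝ} (hδ : 0 < δ)
    (h : ∀ A, MeasurableSet A → ∫⁻ x in A, f x ∂μ ≤ C * μ A ^ (1 - δ))
    {a : ℝ≥0∞} (ha : a ≠ 0) :
    μ {x | a < f x} ≤ (C / a) ^ (1 / δ) := by
  have hA : MeasurableSet {x | a < f x} := hf measurableSet_Ioi
  refine ENNReal.le_rpow_one_div_of_mul_le_mul_rpow hδ ha hC (measure_ne_top _ _) ?_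
  calc a * μ {x | a < f x} = ∫⁻ _ in {x | a < f x}, a ∂μ := (setLIntegral_const _ a).symm
    _ ≤ ∫⁻ x in {x | a < f x}, f x ∂μ := setLIntegral_mono hf fun _ hx ↦ hx.le
    _ ≤ C * μ {x | a < f x} ^ (1 - δ) := h _ hA

theorem lintegral_rpow_le_add_tsum (μ : Measure α) (hf : Measurable f) {p : ℝ} (hp : 0 ≤ p) :
    ∫⁻ x, f x ^ p ∂μ ≤ μ univ + ∑' n : ℕ, ((2 : ℝ≥0∞) ^ (n + 1)) ^ p * μ {x | 2 ^ n < f x} :=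
  calc ∫⁻ x, f x ^ p ∂μ
      ≤ ∫⁻ x, 1 + ∑' n : ℕ,
          (Ioi ((2 : ℝ≥0∞) ^ n)).indicator (fun _ ↦ ((2 : ℝ≥0∞) ^ (n + 1)) ^ p) (f x) ∂μ :=
        lintegral_mono fun x ↦ ENNReal.rpow_le_one_add_tsum_indicator (f x) hp
    _ = _ := by
      rw [lintegral_add_left measurable_const, lintegral_one,
        lintegral_tsum fun n ↦ ?_]
      · simp_rw [lintegral_indicator_const_comp hf measurableSet_Ioi]
        rfl
      · exact ((measurable_const.indicator measurableSet_Ioi).comp hf).aemeasurable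

theorem lintegral_rpow_lt_top_of_meas_lt_le_div_rpow [IsFiniteMeasure μ] (hf : Measurable f)
    {C : ℝ≥0∞} (hC : C ≠ ∞) {p q : ℝ} (hp : 0 ≤ p) (hpq : p < q)
    (hweak : ∀ a, 0 < a → μ {x | a < f x} ≤ (C / a) ^ q) :
    ∫⁻ x, f x ^ p ∂μ < ∞ := by
  have hq : 0 ≤ q := hp.trans hpq.le
  have hr : (2 : ℝ≥0∞) ^ (p - q) < 1 :=
    ENNReal.rpow_lt_one_of_one_lt_of_neg (by norm_num) (by linarith)
  have hseries : ∑' n : ℕ, ((2 : ℝ≥0∞) ^ (n + 1)) ^ p * μ {x | 2 ^ n < f x}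
      ≤ ∑' n : ℕ, 2 ^ p * C ^ q * (2 ^ (p - q)) ^ n := by
    refine ENNReal.tsum_le_tsum fun n ↦ ?_
    rw [← ENNReal.two_pow_succ_rpow_mul_div_two_pow_rpow C hp hq]
    gcongr
    exact hweak _ (by positivity)
  refine (lintegral_rpow_le_add_tsum μ hf hp).trans_lt (ENNReal.add_lt_top.2
    ⟨measure_lt_top μ univ, hseries.trans_lt ?_⟩)
  rw [ENNReal.tsum_mul_left, ENNReal.tsum_geometric]
  exact ENNReal.mul_lt_top
    (ENNReal.mul_lt_top (ENNReal.rpow_lt_top_of_nonneg hp ENNReal.ofNat_ne_top)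
      (ENNReal.rpow_lt_top_of_nonneg hq hC))
    (ENNReal.inv_lt_top.2 (tsub_pos_of_lt hr))

end MeasureTheory

open MeasureTheory

theorem stmt11_general {X : Type*} [MeasurableSpace X] (ρ : Measure X) [IsFiniteMeasure ρ]
    (T : Set X → Set X) (δ : ℝ) (hδ0 : 0 < δ)
    (Ctil : ℝ)
    (hT : ∀ A : Set X, MeasurableSet A →
      ρ (T A) ≤ ENNReal.ofReal Ctil * ρ A ^ (1 - δ))
    (ν : Measure X) (f : X → ENNReal) (hf : Measurable f)
    (hν : ∀ A : Set X, MeasurableSet A → ν A = ρ (T A))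
    (hdens : ∀ A : Set X, MeasurableSet A → ν A = ∫⁻ x in A, f x ∂ρ) :
    (∀ lam : ENNReal, 0 < lam →
        ρ {x | lam < f x} ≤ (ENNReal.ofReal Ctil / lam) ^ (1 / δ)) ∧
      ∀ p : ℝ, 0 < p → p < 1 / δ → ∫⁻ x, f x ^ p ∂ρ < ⊤ := by
  have hsetLIntegral :
      ∀ A, MeasurableSet A → ∫⁻ x in A, f x ∂ρ ≤ ENNReal.ofReal Ctil * ρ A ^ (1 - δ) :=
    fun A hA ↦ (hdens A hA).symm.trans (hν A hA) ▸ hT A hA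
  have htail : ∀ lam : ENNReal, 0 < lam →
      ρ {x | lam < f x} ≤ (ENNReal.ofReal Ctil / lam) ^ (1 / δ) := fun lam hlam ↦
    meas_lt_le_of_setLIntegral_le_mul_rpow hf ENNReal.ofReal_ne_top hδ0 hsetLIntegral hlam.ne'
  exact ⟨htail, fun p hp hpδ ↦
    lintegral_rpow_lt_top_of_meas_lt_le_div_rpow hf ENNReal.ofReal_ne_top hp.le hpδ htail⟩

/-- Abstract upgrade of quasi-invariance to `L^p` densities: if `ρ` is a finite measure,
`T` a set map with `ρ(T(A)) ≤ C̃ ρ(A)^{1-δ}` for measurable `A` (`δ ∈ (0,1)`, `C̃ > 0`),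
and `ν` is a measure with `ν(A) = ρ(T(A))` which is absolutely continuous w.r.t. `ρ`
with density `f`, then `ρ({f > λ}) ≤ (C̃/λ)^{1/δ}` for every `λ > 0`, and consequently
`∫ f^p dρ < ∞` for every `p < 1/δ`. -/
theorem stmt11 {X : Type*} [MeasurableSpace X] (ρ : Measure X) [IsFiniteMeasure ρ]
    (T : Set X → Set X) (δ : ℝ) (hδ0 : 0 < δ) (hδ1 : δ < 1)
    (Ctil : ℝ) (hC : 0 < Ctil)
    (hT : ∀ A : Set X, MeasurableSet A →
      ρ (T A) ≤ ENNReal.ofReal Ctil * ρ A ^ (1 - δ))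
    (ν : Measure X) (f : X → ENNReal) (hf : Measurable f)
    (hν : ∀ A : Set X, MeasurableSet A → ν A = ρ (T A))
    (hdens : ∀ A : Set X, MeasurableSet A → ν A = ∫⁻ x in A, f x ∂ρ) :
    (∀ lam : ENNReal, 0 < lam →
        ρ {x | lam < f x} ≤ (ENNReal.ofReal Ctil / lam) ^ (1 / δ)) ∧
      ∀ p : ℝ, 0 < p → p < 1 / δ → ∫⁻ x, f x ^ p ∂ρ < ⊤ :=
  stmt11_general ρ T δ hδ0 Ctil hT ν f hf hν hdens
end

section
/- Let β > 1, κ > 0, r > 0, R > 0, and β/2 < ς ≤ s. Suppose ρ is a measure supported on {u : ‖u‖_{H^{β/2}} ≤ R} satisfying the Gaussian-type tail bound ρ(‖u‖_{H^s} ≥ λ) ≤ C exp(-c λ^{2r}) for all λ > 0. Then setting a = 2rκ(2s-β)/(2ς-β) and b = 4r(s-β)/(2ς-β), there are constants C', c' > 0 such that ρ(‖u‖_{H^ς} ≥ t^κ) ≤ C' exp(-c' t^a / R^b) for all t > 0. -/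
/-!
Interpolation instead of a dyadic splitting: with `δ = (2ς - β) / (2s - β)` and `θ = 1 - δ` we have
`ς = θ · β/2 + δ · s`, and Hölder's inequality on the Fourier side gives
`‖u‖_{H^ς} ≤ √2 ‖u‖_{H^{β/2}}^θ ‖u‖_{H^s}^δ`. On the support of `ρ` the first factor is at most
`R^θ`, so `‖u‖_{H^ς} ≥ t^κ` forces `‖u‖_{H^s} ≥ λ := (t^κ / (√2 R^θ))^{1/δ}`, and the tail bound at
this `λ` is exactly of the form `C exp(-c' t^a / R^b)`.
-/

/-- The Sobolev `H^σ(𝕋)` norm of a function, expressed through its Fourier coefficients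
`c : ℤ → ℂ`: `‖u‖_{H^σ} = (Σ_{n∈ℤ} (1+|n|^{2σ}) |û(n)|²)^{1/2}`. -/
noncomputable def sobolevNorm (σ : ℝ) (c : ℤ → ℂ) : ℝ :=
  (∑' n : ℤ, (1 + |(n : ℝ)| ^ (2 * σ)) * ‖c n‖ ^ 2) ^ ((1 : ℝ) / 2)

open MeasureTheory

namespace Real

theorem summable_rpow_mul_rpow {ι : Type*} {f g : ι → ℝ} {p q : ℝ} (hf : ∀ i, 0 ≤ f i)
    (hg : ∀ i, 0 ≤ g i) (hp : 0 ≤ p) (hq : 0 ≤ q) (hpq : p + q = 1) (hf' : Summable f)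
    (hg' : Summable g) : Summable fun i => f i ^ p * g i ^ q :=
  .of_nonneg_of_le (fun i => by have := hf i; have := hg i; positivity)
    (fun i => geom_mean_le_arith_mean2_weighted hp hq (hf i) (hg i) hpq)
    ((hf'.mul_left p).add (hg'.mul_left q))

theorem tsum_rpow_mul_rpow_le {ι : Type*} [Countable ι] {f g : ι → ℝ} {p q : ℝ}
    (hf : ∀ i, 0 ≤ f i) (hg : ∀ i, 0 ≤ g i) (hp : 0 ≤ p) (hq : 0 ≤ q) (hpq : p + q = 1)
    (hf' : Summable f) (hg' : Summable g) :
    ∑' i, f i ^ p * g i ^ q ≤ (∑' i, f i) ^ p * (∑' i, g i) ^ q := by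
  let _ : MeasurableSpace ι := ⊤
  have hF : 0 ≤ ∑' i, f i := tsum_nonneg hf
  have hG : 0 ≤ ∑' i, g i := tsum_nonneg hg
  have hfg : ∀ i, 0 ≤ f i ^ p * g i ^ q := fun i => by have := hf i; have := hg i; positivity
  rw [← ENNReal.ofReal_le_ofReal_iff (by positivity), ENNReal.ofReal_mul (by positivity),
    ← ENNReal.ofReal_rpow_of_nonneg hF hp, ← ENNReal.ofReal_rpow_of_nonneg hG hq,
    ENNReal.ofReal_tsum_of_nonneg hfg (summable_rpow_mul_rpow hf hg hp hq hpq hf' hg'),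
    ENNReal.ofReal_tsum_of_nonneg hf hf', ENNReal.ofReal_tsum_of_nonneg hg hg',
    ← lintegral_count, ← lintegral_count, ← lintegral_count]
  have hpow : ∀ i, ENNReal.ofReal (f i ^ p * g i ^ q)
      = ENNReal.ofReal (f i) ^ p * ENNReal.ofReal (g i) ^ q := fun i => by
    rw [ENNReal.ofReal_mul (rpow_nonneg (hf i) p), ENNReal.ofReal_rpow_of_nonneg (hf i) hp,
      ENNReal.ofReal_rpow_of_nonneg (hg i) hq]
  simp only [hpow]
  exact ENNReal.lintegral_mul_norm_pow_le (measurable_of_countable _).aemeasurable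
    (measurable_of_countable _).aemeasurable hp hq hpq

theorem one_add_rpow_le_two_mul_rpow_mul_rpow {y a b p q : ℝ} (hy : 0 ≤ y) (hp : 0 ≤ p)
    (hq : 0 ≤ q) : 1 + y ^ (p * a + q * b) ≤ 2 * ((1 + y ^ a) ^ p * (1 + y ^ b) ^ q) := by
  have hA : 1 ≤ 1 + y ^ a := le_add_of_nonneg_right (rpow_nonneg hy a)
  have hB : 1 ≤ 1 + y ^ b := le_add_of_nonneg_right (rpow_nonneg hy b)
  have hAB : 1 ≤ (1 + y ^ a) ^ p * (1 + y ^ b) ^ q :=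
    one_le_mul_of_one_le_of_one_le (one_le_rpow hA hp) (one_le_rpow hB hq)
  have hy_le : y ^ (p * a + q * b) ≤ (1 + y ^ a) ^ p * (1 + y ^ b) ^ q := by
    rcases hy.eq_or_lt with rfl | hy
    · exact (zero_rpow_le_one _).trans hAB
    · rw [rpow_add hy, mul_comm p, mul_comm q, rpow_mul hy.le, rpow_mul hy.le]
      gcongr <;> linarith
  linarith

end Real

open Real

noncomputable def sobolevTerm (σ : ℝ) (c : ℤ → ℂ) (n : ℤ) : ℝ :=
  (1 + |(n : ℝ)| ^ (2 * σ)) * ‖c n‖ ^ 2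

theorem sobolevNorm_eq (σ : ℝ) (c : ℤ → ℂ) :
    sobolevNorm σ c = (∑' n, sobolevTerm σ c n) ^ ((1 : ℝ) / 2) := rfl

theorem sobolevTerm_nonneg (σ : ℝ) (c : ℤ → ℂ) (n : ℤ) : 0 ≤ sobolevTerm σ c n := by
  unfold sobolevTerm; positivity

theorem sobolevNorm_nonneg (σ : ℝ) (c : ℤ → ℂ) : 0 ≤ sobolevNorm σ c :=
  rpow_nonneg (tsum_nonneg (sobolevTerm_nonneg σ c)) _

theorem sobolevTerm_le_two_mul {σ τ : ℝ} (h : σ ≤ τ) (c : ℤ → ℂ) (n : ℤ) :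
    sobolevTerm σ c n ≤ 2 * sobolevTerm τ c n := by
  have hweight : |(n : ℝ)| ^ (2 * σ) ≤ 1 + |(n : ℝ)| ^ (2 * τ) := by
    -- `0 ^ (2 * σ) = 1` when `σ = 0`, so the `1 +` on the right is needed at `n = 0`
    rcases eq_or_ne n 0 with rfl | hn
    · simpa using (zero_rpow_le_one _).trans (le_add_of_nonneg_right (zero_rpow_nonneg _))
    · have : (1 : ℝ) ≤ |(n : ℝ)| := by exact_mod_cast Int.one_le_abs hn
      linarith [rpow_le_rpow_of_exponent_le this (by linarith : 2 * σ ≤ 2 * τ)]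
  unfold sobolevTerm
  have := rpow_nonneg (abs_nonneg (n : ℝ)) (2 * τ)
  nlinarith [norm_nonneg (c n), sq_nonneg ‖c n‖]

theorem Summable.sobolevTerm_of_le {σ τ : ℝ} {c : ℤ → ℂ} (hτ : Summable (sobolevTerm τ c))
    (h : σ ≤ τ) : Summable (sobolevTerm σ c) :=
  .of_nonneg_of_le (sobolevTerm_nonneg σ c) (sobolevTerm_le_two_mul h c) (hτ.mul_left 2)

theorem sobolevTerm_interpolation {σ₀ σ₁ p q : ℝ} (hp : 0 ≤ p) (hq : 0 ≤ q) (hpq : p + q = 1)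
    (c : ℤ → ℂ) (n : ℤ) :
    sobolevTerm (p * σ₀ + q * σ₁) c n
      ≤ 2 * (sobolevTerm σ₀ c n ^ p * sobolevTerm σ₁ c n ^ q) := by
  have hm : (0 : ℝ) ≤ ‖c n‖ ^ 2 := by positivity
  have hsplit : ‖c n‖ ^ 2 = (‖c n‖ ^ 2) ^ p * (‖c n‖ ^ 2) ^ q := by
    rw [← rpow_add' hm (by simp [hpq]), hpq, rpow_one]
  have hw := one_add_rpow_le_two_mul_rpow_mul_rpow (a := 2 * σ₀) (b := 2 * σ₁)
    (abs_nonneg (n : ℝ)) hp hq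
  unfold sobolevTerm
  rw [mul_rpow (by positivity) hm, mul_rpow (by positivity) hm,
    show 2 * (p * σ₀ + q * σ₁) = p * (2 * σ₀) + q * (2 * σ₁) by ring]
  calc _ ≤ 2 * ((1 + |(n : ℝ)| ^ (2 * σ₀)) ^ p * (1 + |(n : ℝ)| ^ (2 * σ₁)) ^ q)
          * ((‖c n‖ ^ 2) ^ p * (‖c n‖ ^ 2) ^ q) := by rw [← hsplit]; gcongr
    _ = _ := by ring

theorem sobolevNorm_interpolation {σ₀ σ₁ p q : ℝ} (hp : 0 ≤ p) (hq : 0 ≤ q) (hpq : p + q = 1)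
    {c : ℤ → ℂ} (h₀ : Summable (sobolevTerm σ₀ c)) (h₁ : Summable (sobolevTerm σ₁ c)) :
    sobolevNorm (p * σ₀ + q * σ₁) c
      ≤ 2 ^ ((1 : ℝ) / 2) * (sobolevNorm σ₀ c ^ p * sobolevNorm σ₁ c ^ q) := by
  have hS₀ : 0 ≤ ∑' n, sobolevTerm σ₀ c n := tsum_nonneg (sobolevTerm_nonneg σ₀ c)
  have hS₁ : 0 ≤ ∑' n, sobolevTerm σ₁ c n := tsum_nonneg (sobolevTerm_nonneg σ₁ c)
  have hsum : ∑' n, sobolevTerm (p * σ₀ + q * σ₁) c n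
      ≤ 2 * ((∑' n, sobolevTerm σ₀ c n) ^ p * (∑' n, sobolevTerm σ₁ c n) ^ q) := by
    have hg := (summable_rpow_mul_rpow (sobolevTerm_nonneg σ₀ c) (sobolevTerm_nonneg σ₁ c)
      hp hq hpq h₀ h₁).mul_left 2
    have hint := sobolevTerm_interpolation (σ₀ := σ₀) (σ₁ := σ₁) hp hq hpq c
    calc _ ≤ ∑' n, 2 * (sobolevTerm σ₀ c n ^ p * sobolevTerm σ₁ c n ^ q) :=
          (hg.of_nonneg_of_le (sobolevTerm_nonneg _ c) hint).tsum_le_tsum hint hg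
      _ ≤ _ := by
        rw [tsum_mul_left]
        gcongr
        exact tsum_rpow_mul_rpow_le (sobolevTerm_nonneg σ₀ c) (sobolevTerm_nonneg σ₁ c)
          hp hq hpq h₀ h₁
  rw [sobolevNorm_eq, sobolevNorm_eq, sobolevNorm_eq, ← rpow_mul hS₀, ← rpow_mul hS₁,
    mul_comm (1 / 2) p, mul_comm (1 / 2) q, rpow_mul hS₀, rpow_mul hS₁, ← mul_rpow,
    ← mul_rpow]
  · exact rpow_le_rpow (tsum_nonneg (sobolevTerm_nonneg _ c)) hsum (by norm_num)
  all_goals positivity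

theorem rpow_inv_le_sobolevNorm_of_interpolation {σ₀ σ₁ p q R T : ℝ} (hp : 0 ≤ p) (hq : 0 < q)
    (hpq : p + q = 1) (hσ : σ₀ ≤ σ₁) (hR : 0 < R) (hT : 0 ≤ T) {c : ℤ → ℂ}
    (h₁ : Summable (sobolevTerm σ₁ c)) (hR₀ : sobolevNorm σ₀ c ≤ R)
    (hT₁ : T ≤ sobolevNorm (p * σ₀ + q * σ₁) c) :
    (T / (2 ^ ((1 : ℝ) / 2) * R ^ p)) ^ q⁻¹ ≤ sobolevNorm σ₁ c := by
  rw [rpow_inv_le_iff_of_pos (by positivity) (sobolevNorm_nonneg σ₁ c) hq,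
    div_le_iff₀ (by positivity)]
  calc T ≤ 2 ^ ((1 : ℝ) / 2) * (sobolevNorm σ₀ c ^ p * sobolevNorm σ₁ c ^ q) :=
        hT₁.trans (sobolevNorm_interpolation hp hq.le hpq (h₁.sobolevTerm_of_le hσ) h₁)
    _ ≤ 2 ^ ((1 : ℝ) / 2) * (R ^ p * sobolevNorm σ₁ c ^ q) := by
        have := sobolevNorm_nonneg σ₀ c
        have := sobolevNorm_nonneg σ₁ c
        gcongr
    _ = _ := by ring

theorem stmt17_general {X : Type*} [MeasurableSpace X] (ρ : MeasureTheory.Measure X)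
    (β κ r R s ς : ℝ) (hR : 0 < R)
    (hς : β / 2 < ς) (hςs : ς ≤ s)
    (F : X → ℤ → ℂ)
    (hsum : ∀ᵐ x ∂ρ, Summable (fun n : ℤ => (1 + |(n : ℝ)| ^ (2 * s)) * ‖F x n‖ ^ 2))
    (hsupp : ∀ᵐ x ∂ρ, sobolevNorm (β / 2) (F x) ≤ R)
    (C c : ℝ) (hC : 0 < C) (hc : 0 < c)
    (htail : ∀ lam : ℝ, 0 < lam →
      ρ {x | lam ≤ sobolevNorm s (F x)} ≤
        ENNReal.ofReal (C * Real.exp (-c * lam ^ (2 * r)))) :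
    ∃ C' c' : ℝ, 0 < C' ∧ 0 < c' ∧ ∀ t : ℝ, 0 < t →
      ρ {x | t ^ κ ≤ sobolevNorm ς (F x)} ≤
        ENNReal.ofReal (C' * Real.exp
          (-c' * t ^ (2 * r * κ * ((2 * s - β) / (2 * ς - β))) /
            R ^ (4 * r * ((s - β) / (2 * ς - β))))) := by
  set δ := (2 * ς - β) / (2 * s - β) with hδ_def
  have hsβ : 0 < 2 * s - β := by linarith
  have hδ : 0 < δ := div_pos (by linarith) hsβ
  have hθ : 0 ≤ 1 - δ := by rw [sub_nonneg, div_le_one hsβ]; linarith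
  have hς_eq : (1 - δ) * (β / 2) + δ * s = ς := by
    rw [hδ_def]; field_simp; ring
  set b := 4 * r * ((s - β) / (2 * ς - β))
  set e := 2 * r * (1 - δ) / δ
  refine ⟨C, c * 2 ^ (-(r / δ)) * R ^ (b - e), hC, by positivity, fun t ht => ?_⟩
  set lam := (t ^ κ / (2 ^ ((1 : ℝ) / 2) * R ^ (1 - δ))) ^ δ⁻¹
  have hlam : lam ^ (2 * r)
      = t ^ (2 * r * κ * ((2 * s - β) / (2 * ς - β))) / (2 ^ (r / δ) * R ^ e) := by
    rw [← rpow_mul (by positivity), div_rpow (by positivity) (by positivity),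
      mul_rpow (by positivity) (by positivity), ← rpow_mul ht.le, ← rpow_mul zero_le_two,
      ← rpow_mul hR.le]
    have ha : κ * (δ⁻¹ * (2 * r)) = 2 * r * κ * ((2 * s - β) / (2 * ς - β)) := by
      rw [hδ_def, inv_div]; ring
    rw [ha, show 1 / 2 * (δ⁻¹ * (2 * r)) = r / δ by ring,
      show (1 - δ) * (δ⁻¹ * (2 * r)) = e by ring]
  calc ρ {x | t ^ κ ≤ sobolevNorm ς (F x)} ≤ ρ {x | lam ≤ sobolevNorm s (F x)} := by
        refine measure_mono_ae ?_
        filter_upwards [hsum, hsupp] with x hxs hxR hxt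
        rw [← hς_eq] at hxt
        exact rpow_inv_le_sobolevNorm_of_interpolation hθ hδ (by ring) (by linarith) hR
          (by positivity) hxs hxR hxt
    _ ≤ ENNReal.ofReal (C * Real.exp (-c * lam ^ (2 * r))) := htail _ (by positivity)
    _ = _ := by
        rw [hlam, rpow_sub hR, rpow_neg zero_le_two]
        field_simp

/-- Concentration transfer: let `β > 1`, `κ > 0`, `r > 0`, `R > 0`, `β/2 < ς ≤ s`, and
let `ρ` be a measure supported (a.e.) on `{‖u‖_{H^{β/2}} ≤ R}` (within `H^s`) satisfying
the Gaussian-type tail bound `ρ(‖u‖_{H^s} ≥ λ) ≤ C exp(-c λ^{2r})`. Then with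
`a = 2rκ(2s-β)/(2ς-β)` and `b = 4r(s-β)/(2ς-β)` there exist `C', c' > 0` such that
`ρ(‖u‖_{H^ς} ≥ t^κ) ≤ C' exp(-c' t^a / R^b)` for all `t > 0`. -/
theorem stmt17 {X : Type*} [MeasurableSpace X] (ρ : MeasureTheory.Measure X)
    (β κ r R s ς : ℝ) (hβ : 1 < β) (hκ : 0 < κ) (hr : 0 < r) (hR : 0 < R)
    (hς : β / 2 < ς) (hςs : ς ≤ s)
    (F : X → ℤ → ℂ)
    (hsum : ∀ᵐ x ∂ρ, Summable (fun n : ℤ => (1 + |(n : ℝ)| ^ (2 * s)) * ‖F x n‖ ^ 2))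
    (hsupp : ∀ᵐ x ∂ρ, sobolevNorm (β / 2) (F x) ≤ R)
    (C c : ℝ) (hC : 0 < C) (hc : 0 < c)
    (htail : ∀ lam : ℝ, 0 < lam →
      ρ {x | lam ≤ sobolevNorm s (F x)} ≤
        ENNReal.ofReal (C * Real.exp (-c * lam ^ (2 * r)))) :
    ∃ C' c' : ℝ, 0 < C' ∧ 0 < c' ∧ ∀ t : ℝ, 0 < t →
      ρ {x | t ^ κ ≤ sobolevNorm ς (F x)} ≤
        ENNReal.ofReal (C' * Real.exp
          (-c' * t ^ (2 * r * κ * ((2 * s - β) / (2 * ς - β))) /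
            R ^ (4 * r * ((s - β) / (2 * ς - β))))) :=
  stmt17_general ρ β κ r R s ς hR hς hςs F hsum hsupp C c hC hc htail
end
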